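/- arXiv:2502.03345 — 6 statements merged into one kernel-verified Lean document; each statement's English description precedes it below -/
import Mathlib

section
/- For n = 3, the sequences a_r, b_r, c_r satisfy: if r ≡ 0 mod 6 then a_r = b_r + 1 = c_r + 1; if r ≡ 1 mod 6 then c_r = a_r - 1 = b_r - 1; if r ≡ 2 mod 6 then b_r = a_r + 1 = c_r + 1; if r ≡ 3 mod 6 then a_r = b_r - 1 = c_r - 1; if r ≡ 4 mod 6 then c_r = a_r + 1 = b_r + 1; if r ≡ 5 mod 6 then b_r = a_r - 1 = c_r - 1. -/
/-!
The differences `(a_r - b_r, b_r - c_r)` evolve by the linear map `(x, y) ↦ (-y, x + y)`, whose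
matrix has characteristic polynomial `X² - X + 1`, so its sixth power is the identity. Hence the
differences are periodic of period 6 starting from `(1, 0)`, and the six cases of the theorem are
the six points of this orbit.
-/

/-- The `n = 3` Ducci coefficient triple `(a_r, b_r, c_r)`. -/
def abc : ℕ → ℤ × ℤ × ℤ
  | 0 => (1, 0, 0)
  | r + 1 => ((abc r).1 + (abc r).2.2, (abc r).2.1 + (abc r).1, (abc r).2.2 + (abc r).2.1)

def A (r : ℕ) : ℤ := (abc r).1
def B (r : ℕ) : ℤ := (abc r).2.1
def C (r : ℕ) : ℤ := (abc r).2.2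

def gaps (r : ℕ) : ℤ × ℤ := (A r - B r, B r - C r)

def gapStep (v : ℤ × ℤ) : ℤ × ℤ := (-v.2, v.1 + v.2)

theorem gapStep_iterate_six : gapStep^[6] = id := by
  funext v
  simp only [Function.iterate_succ, Function.iterate_zero, Function.comp_apply, gapStep, id]
  ext <;> ring

theorem gaps_succ (r : ℕ) : gaps (r + 1) = gapStep (gaps r) := by
  simp only [gaps, gapStep, A, B, C, abc, Prod.mk.injEq]
  constructor <;> ring

theorem gaps_eq_iterate (r : ℕ) : gaps r = gapStep^[r] (1, 0) := by
  induction r with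
  | zero => rfl
  | succ r ih => rw [gaps_succ, ih, Function.iterate_succ_apply']

theorem gaps_eq_iterate_mod_six (r : ℕ) : gaps r = gapStep^[r % 6] (1, 0) := by
  have periodic : Function.IsPeriodicPt gapStep 6 (1, 0) := congrFun gapStep_iterate_six (1, 0)
  rw [gaps_eq_iterate, periodic.iterate_mod_apply]

theorem abc_mod_six (r : ℕ) :
    (r % 6 = 0 → A r = B r + 1 ∧ A r = C r + 1) ∧
    (r % 6 = 1 → C r = A r - 1 ∧ C r = B r - 1) ∧
    (r % 6 = 2 → B r = A r + 1 ∧ B r = C r + 1) ∧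
    (r % 6 = 3 → A r = B r - 1 ∧ A r = C r - 1) ∧
    (r % 6 = 4 → C r = A r + 1 ∧ C r = B r + 1) ∧
    (r % 6 = 5 → B r = A r - 1 ∧ B r = C r - 1) := by
  have orbit := gaps_eq_iterate_mod_six r
  refine ⟨?_, ?_, ?_, ?_, ?_, ?_⟩ <;> intro hr <;>
    simp only [hr, gaps, gapStep, Prod.ext_iff, Function.iterate_succ_apply',
      Function.iterate_zero_apply] at orbit <;>
    omega
end

section
/- Let m be a prime with m ≡ 5 mod 6, and n = 3. Then modulo m: a_{m-1} ≡ 0, b_{m-1} ≡ 0, and c_{m-1} ≡ 1. Consequently D^{m-1}(x_1,x_2,x_3) = (x_3,x_1,x_2) = H^2(x_1,x_2,x_3) for every (x_1,x_2,x_3) ∈ (Z/mZ)^3. -/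
/-- The Ducci map on `(ZMod m)^3`. -/
def D (m : ℕ) (u : Fin 3 → ZMod m) : Fin 3 → ZMod m :=
  fun i => u i + u (i + 1)

/-- The cyclic left shift on `(ZMod m)^3`. -/
def H (m : ℕ) (u : Fin 3 → ZMod m) : Fin 3 → ZMod m :=
  fun i => u (i + 1)

/-!
With `S` the cyclic shift, viewed as a linear endomorphism of `(ZMod m)^3`, we have `D = 1 + S`
and `S^3 = 1`. In characteristic `m` the Frobenius identity gives
`(1 + S)^m = 1 + S^m = 1 + S^2 = S^2 (1 + S)` because `m ≡ 2 (mod 3)`, and `1 + S` can be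
cancelled since `(1 + S)(1 - S + S^2) = 1 + S^3 = 2` is invertible for odd `m`. Hence
`D^(m-1) = S^2 = H^2`, and evaluating both sides at a basis vector reads off `a`, `b`, `c`.
-/

lemma one_add_pow_pred_eq_sq_of_pow_three_eq_one {R : Type*} [Ring R] {p : ℕ} [ExpChar R p]
    {s : R} (hs : s ^ 3 = 1) (h2 : IsUnit (2 : R)) (hp : p % 3 = 2) :
    (1 + s) ^ (p - 1) = s ^ 2 := by
  have hsp : s ^ p = s ^ 2 := by
    rw [← Nat.div_add_mod p 3, hp, pow_add, pow_mul, hs, one_pow, one_mul]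
  have hfactor : (1 + s) * (1 - s + s ^ 2) = 2 := by
    calc (1 + s) * (1 - s + s ^ 2) = 1 + s ^ 3 := by noncomm_ring
      _ = 2 := by rw [hs, one_add_one_eq_two]
  have hfrob : (1 + s) ^ p = s ^ 2 * (1 + s) := by
    rw [add_pow_expChar_of_commute p (Commute.one_left s), one_pow, hsp, mul_add, mul_one,
      ← pow_succ, hs, add_comm]
  refine h2.mul_left_inj.1 ?_
  calc (1 + s) ^ (p - 1) * 2 = (1 + s) ^ (p - 1) * (1 + s) * (1 - s + s ^ 2) := by
        rw [mul_assoc, hfactor]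
    _ = s ^ 2 * (1 + s) * (1 - s + s ^ 2) := by
        rw [← pow_succ, Nat.sub_add_cancel (by omega), hfrob]
    _ = s ^ 2 * 2 := by rw [mul_assoc, hfactor]

lemma isUnit_two_of_not_two_dvd {m : ℕ} (hm : ¬2 ∣ m) (R : Type*) [Ring R] [Algebra (ZMod m) R] :
    IsUnit (2 : R) := by
  have h2 := ((ZMod.isUnit_prime_iff_not_dvd Nat.prime_two).2 hm).map (algebraMap (ZMod m) R)
  rwa [map_natCast, Nat.cast_ofNat] at h2

lemma D_iterate_apply (m r : ℕ) (u : Fin 3 → ZMod m) (i : Fin 3) :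
    (D m)^[r] u i = A r * u i + B r * u (i + 1) + C r * u (i + 2) := by
  induction r generalizing i with
  | zero => simp [A, B, C, abc]
  | succ r ih =>
    have h1 : i + 1 + 1 = i + 2 := by rw [add_assoc]; rfl
    have h2 : i + 1 + 2 = i := by rw [add_assoc]; exact add_zero i
    rw [Function.iterate_succ_apply', D, ih, ih, h1, h2]
    simp only [A, B, C, abc, Int.cast_add]
    ring

lemma coeffs_of_D_iterate_eq_H_sq {m r : ℕ} (h : (D m)^[r] = (H m)^[2]) :
    (A r : ZMod m) = 0 ∧ (B r : ZMod m) = 0 ∧ (C r : ZMod m) = 1 := by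
  have key (i : Fin 3) := congrFun (congrFun h (Pi.single 0 1)) i
  simp only [D_iterate_apply, Function.iterate_succ_apply, Function.iterate_zero_apply, H] at key
  refine ⟨?_, ?_, ?_⟩
  · simpa using key 0
  · simpa using key 2
  · simpa using key 1

def shiftEnd (m : ℕ) : Module.End (ZMod m) (Fin 3 → ZMod m) :=
  LinearMap.funLeft (ZMod m) (ZMod m) (· + 1)

lemma coe_shiftEnd (m : ℕ) : ⇑(shiftEnd m) = H m := rfl

lemma coe_one_add_shiftEnd (m : ℕ) : ⇑(1 + shiftEnd m) = D m := rfl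

lemma shiftEnd_pow_three (m : ℕ) : shiftEnd m ^ 3 = 1 := by
  ext u i
  simp [shiftEnd, pow_succ, add_assoc]

theorem prime_five_mod_six (m : ℕ) (hm : m.Prime) (h5 : m % 6 = 5) :
    ((A (m - 1) : ZMod m) = 0 ∧ (B (m - 1) : ZMod m) = 0 ∧ (C (m - 1) : ZMod m) = 1) ∧
    ∀ u : Fin 3 → ZMod m, (D m)^[m - 1] u = (H m)^[2] u := by
  have := Fact.mk hm
  have : CharP (Module.End (ZMod m) (Fin 3 → ZMod m)) m :=
    charP_of_injective_algebraMap' (ZMod m) m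
  have hD : (D m)^[m - 1] = (H m)^[2] := by
    rw [← coe_one_add_shiftEnd, ← coe_shiftEnd, ← Module.End.coe_pow, ← Module.End.coe_pow,
      one_add_pow_pred_eq_sq_of_pow_three_eq_one (shiftEnd_pow_three m)
        (isUnit_two_of_not_two_dvd (m := m) (by omega) _) (by omega)]
  exact ⟨coeffs_of_D_iterate_eq_H_sq hD, congrFun hD⟩
end

section
/- Let m = 2^l with l ≥ 1 and n = 3. Then a_{l+2} ≡ c_l, b_{l+2} ≡ a_l, and c_{l+2} ≡ b_l, all modulo 2^l. -/
/-! Two steps of the recursion rotate the triple and add `2 ^ l` to every entry: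
`a_{l+2} = c_l + 2^l`, `b_{l+2} = a_l + 2^l`, `c_{l+2} = b_l + 2^l`. This is an induction on `l`,
since each of `a, b, c` at step `l + 3` is the sum of two entries at step `l + 2`. -/

lemma A_succ (r : ℕ) : A (r + 1) = A r + C r := rfl
lemma B_succ (r : ℕ) : B (r + 1) = B r + A r := rfl
lemma C_succ (r : ℕ) : C (r + 1) = C r + B r := rfl

lemma abc_add_two (l : ℕ) :
    A (l + 2) = C l + 2 ^ l ∧ B (l + 2) = A l + 2 ^ l ∧ C (l + 2) = B l + 2 ^ l := by
  induction l with
  | zero => exact ⟨rfl, rfl, rfl⟩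
  | succ l ih =>
    obtain ⟨hA, hB, hC⟩ := ih
    refine ⟨?_, ?_, ?_⟩
    · rw [A_succ (l + 2), hA, hC, C_succ]; ring
    · rw [B_succ (l + 2), hB, hA, A_succ]; ring
    · rw [C_succ (l + 2), hC, hB, B_succ]; ring

lemma two_pow_eq_zero (l : ℕ) : (2 : ZMod (2 ^ l)) ^ l = 0 := by
  exact_mod_cast ZMod.natCast_self (2 ^ l)

theorem abc_two_pow_general (l : ℕ) :
    (A (l + 2) : ZMod (2 ^ l)) = (C l : ZMod (2 ^ l)) ∧
    (B (l + 2) : ZMod (2 ^ l)) = (A l : ZMod (2 ^ l)) ∧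
    (C (l + 2) : ZMod (2 ^ l)) = (B l : ZMod (2 ^ l)) := by
  obtain ⟨hA, hB, hC⟩ := abc_add_two l
  simp only [hA, hB, hC, Int.cast_add, Int.cast_pow, Int.cast_ofNat, two_pow_eq_zero, add_zero,
    and_self]

theorem abc_two_pow (l : ℕ) (hl : 1 ≤ l) :
    (A (l + 2) : ZMod (2 ^ l)) = (C l : ZMod (2 ^ l)) ∧
    (B (l + 2) : ZMod (2 ^ l)) = (A l : ZMod (2 ^ l)) ∧
    (C (l + 2) : ZMod (2 ^ l)) = (B l : ZMod (2 ^ l)) :=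
  abc_two_pow_general l
end

section
/- Let m = 2^l · p where l ≥ 1 and p is prime with p ≡ 5 mod 6, and n = 3. Then a_{l+p-1} ≡ b_l, b_{l+p-1} ≡ c_l, and c_{l+p-1} ≡ a_l, all modulo m. -/
open Finset

/-- Multiplication by `x` in `ℤ[x]/(x³ - 1)`. -/
def rotateTriple {α : Type*} (v : α × α × α) : α × α × α := (v.2.2, v.1, v.2.1)

lemma isPeriodicPt_rotateTriple {α : Type*} (v : α × α × α) :
    Function.IsPeriodicPt rotateTriple 3 v :=
  rfl

lemma rotateTriple_add_const {R : Type*} [Add R] (v : R × R × R) (x : R) :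
    rotateTriple (v + (x, x, x)) = rotateTriple v + (x, x, x) :=
  rfl

lemma abc_sum (r : ℕ) : (abc r).1 + (abc r).2.1 + (abc r).2.2 = 2 ^ r := by
  induction r with
  | zero => rfl
  | succ r ih => simp only [abc, pow_succ]; linarith

lemma abc_add_two_s13 (r : ℕ) : abc (r + 2) = rotateTriple (abc r) + (2 ^ r, 2 ^ r, 2 ^ r) := by
  have hsum := abc_sum r
  simp only [abc, rotateTriple, Prod.mk_add_mk, Prod.mk.injEq]
  refine ⟨?_, ?_, ?_⟩ <;> linarith

lemma abc_add_two_mul (l k : ℕ) :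
    abc (l + 2 * k) = rotateTriple^[k] (abc l) +
      (2 ^ l * ∑ i ∈ range k, 4 ^ i, 2 ^ l * ∑ i ∈ range k, 4 ^ i, 2 ^ l * ∑ i ∈ range k, 4 ^ i) := by
  induction k with
  | zero => simp
  | succ k ih =>
    have hpow : (2 : ℤ) ^ (l + 2 * k) = 2 ^ l * 4 ^ k := by rw [pow_add, pow_mul]; norm_num
    rw [show l + 2 * (k + 1) = l + 2 * k + 2 by ring, abc_add_two_s13, ih, rotateTriple_add_const,
      Function.iterate_succ_apply', add_assoc]
    congr 1
    simp only [Prod.mk_add_mk, hpow, sum_range_succ, mul_add]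

lemma dvd_geom_sum_four {p k : ℕ} (hp : p.Prime) (hpk : p = 2 * k + 1) (hp3 : p ≠ 3) :
    (p : ℤ) ∣ ∑ i ∈ range k, 4 ^ i := by
  have : Fact p.Prime := ⟨hp⟩
  rw [← ZMod.intCast_zmod_eq_zero_iff_dvd]
  push_cast
  have htwo : (2 : ZMod p) ≠ 0 := by exact_mod_cast ZMod.prime_ne_zero p 2 (by omega)
  have hthree : (3 : ZMod p) ≠ 0 := by exact_mod_cast ZMod.prime_ne_zero p 3 hp3
  have hfermat : (4 : ZMod p) ^ k = 1 := by
    rw [show (4 : ZMod p) = 2 ^ 2 by norm_num, ← pow_mul, show 2 * k = p - 1 by omega]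
    exact ZMod.pow_card_sub_one_eq_one htwo
  have hgeom := geom_sum_mul (4 : ZMod p) k
  rw [hfermat, sub_self, show (4 : ZMod p) - 1 = 3 by norm_num] at hgeom
  exact (mul_eq_zero.mp hgeom).resolve_right hthree

theorem abc_two_pow_mul_prime_general (l p : ℕ) (hp : p.Prime) (h5 : p % 6 = 5) :
    (A (l + p - 1) : ZMod (2 ^ l * p)) = (B l : ZMod (2 ^ l * p)) ∧
    (B (l + p - 1) : ZMod (2 ^ l * p)) = (C l : ZMod (2 ^ l * p)) ∧
    (C (l + p - 1) : ZMod (2 ^ l * p)) = (A l : ZMod (2 ^ l * p)) := by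
  obtain ⟨k, hpk⟩ : ∃ k, p = 2 * k + 1 := ⟨p / 2, by omega⟩
  set G := 2 ^ l * ∑ i ∈ range k, (4 : ℤ) ^ i
  have hG : ((2 ^ l * p : ℕ) : ℤ) ∣ G := by
    push_cast
    exact mul_dvd_mul_left _ (dvd_geom_sum_four hp hpk (by omega))
  have hcast (x : ℤ) : ((x + G : ℤ) : ZMod (2 ^ l * p)) = x := by
    rw [Int.cast_add, (ZMod.intCast_zmod_eq_zero_iff_dvd _ _).mpr hG, add_zero]
  have hrot : rotateTriple^[k] (abc l) = rotateTriple^[2] (abc l) := by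
    rw [← (isPeriodicPt_rotateTriple _).iterate_mod_apply, show k % 3 = 2 by omega]
  have habc := abc_add_two_mul l k
  rw [hrot] at habc
  rw [show l + p - 1 = l + 2 * k by omega]
  simp only [A, B, C, habc]
  exact ⟨hcast _, hcast _, hcast _⟩

theorem abc_two_pow_mul_prime (l p : ℕ) (hl : 1 ≤ l) (hp : p.Prime) (h5 : p % 6 = 5) :
    (A (l + p - 1) : ZMod (2 ^ l * p)) = (B l : ZMod (2 ^ l * p)) ∧
    (B (l + p - 1) : ZMod (2 ^ l * p)) = (C l : ZMod (2 ^ l * p)) ∧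
    (C (l + p - 1) : ZMod (2 ^ l * p)) = (A l : ZMod (2 ^ l * p)) :=
  abc_two_pow_mul_prime_general l p hp h5
end

section
/- Let p be a prime with p ≡ 5 mod 6. Then p divides b_{p-1}, where b_r is from the n = 3 Ducci coefficient sequences. -/
lemma A_add_B_add_C (r : ℕ) : A r + B r + C r = 2 ^ r := by
  induction r with
  | zero => simp [A, B, C, abc]
  | succ r ih =>
    simp only [A, B, C, abc] at ih ⊢
    rw [pow_succ, ← ih]
    ring

lemma A_sub_B_add_six (r : ℕ) : A (r + 6) - B (r + 6) = A r - B r := by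
  simp only [A, B, abc]
  ring

lemma C_sub_B_add_six (r : ℕ) : C (r + 6) - B (r + 6) = C r - B r := by
  simp only [B, C, abc]
  ring

lemma A_eq_B_six_mul_add_four (k : ℕ) : A (6 * k + 4) = B (6 * k + 4) := by
  induction k with
  | zero => simp [A, B, abc]
  | succ k ih =>
    have h := A_sub_B_add_six (6 * k + 4)
    rw [show 6 * (k + 1) + 4 = 6 * k + 4 + 6 by ring]
    linarith

lemma C_eq_B_add_one_six_mul_add_four (k : ℕ) : C (6 * k + 4) = B (6 * k + 4) + 1 := by
  induction k with
  | zero => simp [B, C, abc]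
  | succ k ih =>
    have h := C_sub_B_add_six (6 * k + 4)
    rw [show 6 * (k + 1) + 4 = 6 * k + 4 + 6 by ring]
    linarith

lemma three_mul_B_six_mul_add_four (k : ℕ) :
    3 * B (6 * k + 4) = 2 ^ (6 * k + 4) - 1 := by
  have hsum := A_add_B_add_C (6 * k + 4)
  rw [A_eq_B_six_mul_add_four, C_eq_B_add_one_six_mul_add_four] at hsum
  linarith

theorem prime_dvd_b (p : ℕ) (hp : p.Prime) (h5 : p % 6 = 5) : (p : ℤ) ∣ B (p - 1) := by
  obtain ⟨k, hk⟩ : ∃ k, p - 1 = 6 * k + 4 := ⟨p / 6, by omega⟩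
  have hcop2 : IsCoprime (2 : ℤ) p :=
    Nat.isCoprime_iff_coprime.mpr ((Nat.coprime_primes Nat.prime_two hp).mpr (by omega))
  have hcop3 : IsCoprime (p : ℤ) 3 :=
    Nat.isCoprime_iff_coprime.mpr ((Nat.coprime_primes hp Nat.prime_three).mpr (by omega))
  have hfermat : (p : ℤ) ∣ 2 ^ (p - 1) - 1 :=
    (Int.ModEq.pow_card_sub_one_eq_one hp hcop2).symm.dvd
  rw [hk, ← three_mul_B_six_mul_add_four] at hfermat
  rw [hk]
  exact hcop3.dvd_of_dvd_mul_left hfermat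
end

section
/- Let n ≥ 2 and let m = δn - 1 be prime for some δ ≥ 1. Then modulo m, a_{m,s} ≡ 1 if s ≡ 1 mod n or s ≡ 0 mod n, and a_{m,s} ≡ 0 otherwise (for 1 ≤ s ≤ n). -/
/-!
The row `s ↦ a_{r,s}` is the coefficient list of `X (1 + X) ^ r` in the group ring `ℤ[ℤ/n]`,
where `X` is the basis element of `1 : ℤ/n`. Modulo a prime `m`, Frobenius gives
`X (1 + X) ^ m = X + X ^ (m + 1)`, and `X ^ (m + 1) = 1` because `n ∣ m + 1`.
-/

/-- The Ducci coefficients `a_{r,s}`, with `s` taken modulo `n`. -/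
def a (n : ℕ) : ℕ → ZMod n → ℤ
  | 0, s => if s = 1 then 1 else 0
  | r + 1, s => a n r s + a n r (s - 1)

open AddMonoidAlgebra

theorem a_cast_eq_coeff {R : Type*} [Ring R] (n r : ℕ) (s : ZMod n) :
    (a n r s : R) = (single 1 1 * (1 + single 1 1) ^ r : R[ZMod n]).coeff s := by
  induction r generalizing s with
  | zero => simp [a, Finsupp.single_apply, eq_comm]
  | succ r ih =>
    rw [pow_succ, ← mul_assoc, mul_add, mul_one, coeff_add, Finsupp.add_apply,
      coeff_mul_single_apply, mul_one, ← ih, ← ih, ← sub_eq_add_neg, a, Int.cast_add]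

instance AddMonoidAlgebra.charP {R G : Type*} [Semiring R] [AddMonoid G] (p : ℕ) [CharP R p] :
    CharP R[G] p :=
  charP_of_injective_ringHom (f := singleZeroRingHom) (fun _ _ h => by simpa using h) p

theorem AddMonoidAlgebra.one_add_single_one_pow_char {R G : Type*} [CommSemiring R]
    [AddCommMonoid G] (p : ℕ) [Fact p.Prime] [CharP R p] (g : G) :
    (1 + single g 1 : R[G]) ^ p = 1 + single (p • g) 1 := by
  rw [add_pow_char, one_pow, single_pow, one_pow]

theorem a_prime_cast_eq {R : Type*} [CommRing R] (n p : ℕ) [Fact p.Prime] [CharP R p]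
    (s : ZMod n) :
    (a n p s : R) = (if 1 = s then 1 else 0) + (if ((p + 1 : ℕ) : ZMod n) = s then 1 else 0) := by
  rw [a_cast_eq_coeff, one_add_single_one_pow_char, mul_add, mul_one, single_mul_single, mul_one,
    coeff_add, Finsupp.add_apply, coeff_single, coeff_single, Finsupp.single_apply,
    Finsupp.single_apply, nsmul_one, add_comm 1 (p : ZMod n), Nat.cast_succ]

theorem a_m_mod_prime_general (n δ m : ℕ) (hn : 2 ≤ n)
    (hm : m = δ * n - 1) (hmp : m.Prime) (s : ℕ) :
    (a n m (s : ZMod n) : ZMod m) = if s % n = 1 ∨ s % n = 0 then 1 else 0 := by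
  have : Fact m.Prime := ⟨hmp⟩
  have hm_succ : ((m + 1 : ℕ) : ZMod n) = 0 := by
    rw [show m + 1 = δ * n by have := hmp.two_le; omega, Nat.cast_mul, ZMod.natCast_self, mul_zero]
  have h_one : (1 : ZMod n) = s ↔ s % n = 1 := by
    rw [← Nat.cast_one, ZMod.natCast_eq_natCast_iff', Nat.mod_eq_of_lt hn, eq_comm]
  have h_zero : (0 : ZMod n) = s ↔ s % n = 0 := by
    rw [← Nat.cast_zero, ZMod.natCast_eq_natCast_iff', Nat.zero_mod, eq_comm]
  rw [a_prime_cast_eq, hm_succ]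
  simp only [h_one, h_zero]
  by_cases h : s % n = 1 <;> simp [h]

theorem a_m_mod_prime (n δ m : ℕ) [NeZero n] (hn : 2 ≤ n) (hδ : 1 ≤ δ)
    (hm : m = δ * n - 1) (hmp : m.Prime) (s : ℕ) (hs1 : 1 ≤ s) (hsn : s ≤ n) :
    (a n m (s : ZMod n) : ZMod m) = if s % n = 1 ∨ s % n = 0 then 1 else 0 :=
  a_m_mod_prime_general n δ m hn hm hmp s
end
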